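/- arXiv:0802.0156 — 3 statements merged into one kernel-verified Lean document; each statement's English description precedes it below -/
import Mathlib

section
/- The space 𝔖 of all separable continuous L-structures with a distinguished countable dense subset indexed by ℕ, topologized by the basic open sets U_{φ(ā),ε} = {M ∈ 𝔖 : φ^M(ā) < ε} for quantifier-free L-formulas φ, tuples ā from the distinguished dense subset, and ε > 0, is a Polish space. -/
open scoped Classical

/-! ### A core of continuous first-order logic (countable relational signatures) -/

/-- A countable relational continuous signature: relation symbols indexed by `ℕ`
(with a distinguished metric symbol handled separately in the syntax below),
each with an arity and a prescribed uniform-continuity modulus. -/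
structure CSig where
  arity : ℕ → ℕ
  modulus : ℕ → ℝ → ℝ
  modulus_pos : ∀ i ε, 0 < ε → 0 < modulus i ε

/-- Continuous first-order formulas over `S`, with free variables among `Fin n`.
Connectives: rational constants, pointwise min and max, negation `1 - x`,
truncated plus, truncated minus, `|x - y|`, rescaling by rationals; quantifiers
`inf` and `sup` bind the last variable. -/
inductive CFormula (S : CSig) : ℕ → Type
  | dst : ∀ {n}, Fin n → Fin n → CFormula S n
  | rel : ∀ {n} (i : ℕ), (Fin (S.arity i) → Fin n) → CFormula S n
  | const : ∀ {n}, ℚ → CFormula S n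
  | fmin : ∀ {n}, CFormula S n → CFormula S n → CFormula S n
  | fmax : ∀ {n}, CFormula S n → CFormula S n → CFormula S n
  | neg : ∀ {n}, CFormula S n → CFormula S n
  | addT : ∀ {n}, CFormula S n → CFormula S n → CFormula S n
  | subT : ∀ {n}, CFormula S n → CFormula S n → CFormula S n
  | absd : ∀ {n}, CFormula S n → CFormula S n → CFormula S n
  | scale : ∀ {n}, ℚ → CFormula S n → CFormula S n
  | inf : ∀ {n}, CFormula S (n + 1) → CFormula S n
  | sup : ∀ {n}, CFormula S (n + 1) → CFormula S n

/-- Sentences: formulas with no free variables. -/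
abbrev CSentence (S : CSig) := CFormula S 0

/-- Quantifier-free formulas. -/
inductive IsQF {S : CSig} : ∀ {n}, CFormula S n → Prop
  | dst {n} (a b : Fin n) : IsQF (CFormula.dst a b)
  | rel {n} (i : ℕ) (ts : Fin (S.arity i) → Fin n) : IsQF (CFormula.rel i ts)
  | const {n} (q : ℚ) : IsQF (CFormula.const (n := n) q)
  | fmin {n} {φ ψ : CFormula S n} : IsQF φ → IsQF ψ → IsQF (CFormula.fmin φ ψ)
  | fmax {n} {φ ψ : CFormula S n} : IsQF φ → IsQF ψ → IsQF (CFormula.fmax φ ψ)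
  | neg {n} {φ : CFormula S n} : IsQF φ → IsQF (CFormula.neg φ)
  | addT {n} {φ ψ : CFormula S n} : IsQF φ → IsQF ψ → IsQF (CFormula.addT φ ψ)
  | subT {n} {φ ψ : CFormula S n} : IsQF φ → IsQF ψ → IsQF (CFormula.subT φ ψ)
  | absd {n} {φ ψ : CFormula S n} : IsQF φ → IsQF ψ → IsQF (CFormula.absd φ ψ)
  | scale {n} (q : ℚ) {φ : CFormula S n} : IsQF φ → IsQF (CFormula.scale q φ)

/-- Closure of a class of formulas under (finitely many applications of) `inf`. -/
inductive InfCl {S : CSig} (P : ∀ n, CFormula S n → Prop) : ∀ {n}, CFormula S n → Prop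
  | base {n} {φ : CFormula S n} : P n φ → InfCl P φ
  | step {n} {φ : CFormula S (n + 1)} : InfCl P φ → InfCl P (CFormula.inf φ)

/-- Closure of a class of formulas under (finitely many applications of) `sup`. -/
inductive SupCl {S : CSig} (P : ∀ n, CFormula S n → Prop) : ∀ {n}, CFormula S n → Prop
  | base {n} {φ : CFormula S n} : P n φ → SupCl P φ
  | step {n} {φ : CFormula S (n + 1)} : SupCl P φ → SupCl P (CFormula.sup φ)

/-- The pair (Σₖ, Πₖ) of formula classes: Σ₀ = Π₀ = quantifier-free,
Σ_{k+1} = { inf_x̄ φ : φ ∈ Πₖ }, Π_{k+1} = { sup_x̄ φ : φ ∈ Σₖ }. -/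
def SigmaPi (S : CSig) : ℕ → ((∀ n, CFormula S n → Prop) × (∀ n, CFormula S n → Prop))
  | 0 => (fun _ φ => IsQF φ, fun _ φ => IsQF φ)
  | k + 1 => (fun _ φ => InfCl (SigmaPi S k).2 φ, fun _ φ => SupCl (SigmaPi S k).1 φ)

/-- `φ` is a Σₖ formula. -/
def IsSigmaN (S : CSig) (k : ℕ) {n : ℕ} (φ : CFormula S n) : Prop := (SigmaPi S k).1 n φ

/-- `φ` is a Πₖ formula. -/
def IsPiN (S : CSig) (k : ℕ) {n : ℕ} (φ : CFormula S n) : Prop := (SigmaPi S k).2 n φ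

/-- A continuous `L`-structure: a nonempty complete metric space of diameter `≤ 1`
with `[0,1]`-valued interpretations of all predicate symbols, uniformly continuous
with respect to the prescribed moduli. -/
structure CStructure (S : CSig) where
  Carrier : Type
  metric : MetricSpace Carrier
  nonempty : Nonempty Carrier
  complete : @CompleteSpace Carrier metric.toUniformSpace
  bounded : ∀ x y : Carrier, @dist Carrier metric.toDist x y ≤ 1
  rel : ∀ i, (Fin (S.arity i) → Carrier) → ℝ
  rel_nonneg : ∀ i v, 0 ≤ rel i v
  rel_le_one : ∀ i v, rel i v ≤ 1
  rel_uc : ∀ i (ε : ℝ), 0 < ε → ∀ v w,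
    (∀ j, @dist Carrier metric.toDist (v j) (w j) < S.modulus i ε) → |rel i v - rel i w| ≤ ε

attribute [instance] CStructure.metric CStructure.nonempty CStructure.complete

/-- Clamp a rational constant into `[0,1]`. -/
noncomputable def clampQ (q : ℚ) : ℝ := max 0 (min 1 (q : ℝ))

/-- The value of a formula in a structure under a variable assignment. -/
noncomputable def CStructure.eval {S : CSig} (M : CStructure S) :
    ∀ (n : ℕ), CFormula S n → (Fin n → M.Carrier) → ℝ
  | _, .dst a b, v => dist (v a) (v b)
  | _, .rel i ts, v => M.rel i fun j => v (ts j)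
  | _, .const q, _ => clampQ q
  | n, .fmin φ ψ, v => min (M.eval n φ v) (M.eval n ψ v)
  | n, .fmax φ ψ, v => max (M.eval n φ v) (M.eval n ψ v)
  | n, .neg φ, v => 1 - M.eval n φ v
  | n, .addT φ ψ, v => min 1 (M.eval n φ v + M.eval n ψ v)
  | n, .subT φ ψ, v => max 0 (M.eval n φ v - M.eval n ψ v)
  | n, .absd φ ψ, v => |M.eval n φ v - M.eval n ψ v|
  | n, .scale q φ, v => clampQ q * M.eval n φ v
  | n, .inf φ, v => ⨅ x : M.Carrier, M.eval (n + 1) φ (Fin.snoc v x)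
  | n, .sup φ, v => ⨆ x : M.Carrier, M.eval (n + 1) φ (Fin.snoc v x)

/-- The value of a sentence in a structure. -/
noncomputable def CStructure.sval {S : CSig} (M : CStructure S) (φ : CSentence S) : ℝ :=
  M.eval 0 φ (fun i => i.elim0)

/-- A theory: a set of closed conditions `φ ≤ ε`, coded as pairs `(φ, ε)`. -/
abbrev CTheory (S : CSig) := Set (CSentence S × ℝ)

/-- `M` satisfies the theory `T` (all its closed conditions). -/
def CStructure.SatT {S : CSig} (M : CStructure S) (T : CTheory S) : Prop :=
  ∀ c ∈ T, M.sval c.1 ≤ c.2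

/-- The closed condition `φ ≤ ε` follows from `T`. -/
def Entails {S : CSig} (T : CTheory S) (c : CSentence S × ℝ) : Prop :=
  ∀ M : CStructure S, M.SatT T → M.sval c.1 ≤ c.2

/-- The open condition `φ < ε` follows from `T`. -/
def EntailsOpen {S : CSig} (T : CTheory S) (c : CSentence S × ℝ) : Prop :=
  ∀ M : CStructure S, M.SatT T → M.sval c.1 < c.2

/-- `T` is a theory in the official sense: consistent and closed under entailment. -/
def IsTheory {S : CSig} (T : CTheory S) : Prop :=
  (∃ M : CStructure S, M.SatT T) ∧ ∀ c, Entails T c → c ∈ T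

/-- `T` is universal: axiomatizable by closed conditions `sup_x̄ φ(x̄) = 0` with `φ`
quantifier-free (i.e. by conditions `ψ = 0` for Π₁ sentences `ψ`). -/
def IsUniversalTheory {S : CSig} (T : CTheory S) : Prop :=
  ∃ A : Set (CSentence S), (∀ ψ ∈ A, IsPiN S 1 ψ) ∧
    ∀ M : CStructure S, (M.SatT T ↔ ∀ ψ ∈ A, M.sval ψ = 0)

/-- `T` is inductive: axiomatizable by open conditions `sup_x̄ inf_ȳ φ(x̄,ȳ) < ε` with `φ`
quantifier-free (i.e. by open conditions on Π₂ sentences). -/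
def IsInductiveTheory {S : CSig} (T : CTheory S) : Prop :=
  ∃ A : Set (CSentence S × ℝ), (∀ c ∈ A, IsPiN S 2 c.1 ∧ 0 < c.2) ∧
    ∀ M : CStructure S, (M.SatT T ↔ ∀ c ∈ A, M.sval c.1 < c.2)

/-- An embedding of continuous structures: an isometric map preserving all predicates. -/
structure CEmbedding {S : CSig} (M N : CStructure S) where
  toFun : M.Carrier → N.Carrier
  isometry : ∀ x y, dist (toFun x) (toFun y) = dist x y
  map_rel : ∀ i (v : Fin (S.arity i) → M.Carrier), N.rel i (toFun ∘ v) = M.rel i v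

/-- An embedding is elementary if it preserves the values of all formulas. -/
def CEmbedding.Elementary {S : CSig} {M N : CStructure S} (f : CEmbedding M N) : Prop :=
  ∀ (n : ℕ) (φ : CFormula S n) (v : Fin n → M.Carrier),
    N.eval n φ (f.toFun ∘ v) = M.eval n φ v

/-- `T` is model complete: every embedding between models of `T` is elementary. -/
def IsModelComplete {S : CSig} (T : CTheory S) : Prop :=
  ∀ M N : CStructure S, M.SatT T → N.SatT T → ∀ f : CEmbedding M N, f.Elementary

/-- `M` is an existentially closed model of `T`. -/
def IsEC {S : CSig} (T : CTheory S) (M : CStructure S) : Prop :=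
  M.SatT T ∧ ∀ N : CStructure S, N.SatT T → ∀ f : CEmbedding M N,
    ∀ (n : ℕ) (φ : CFormula S (n + 1)), IsQF φ → ∀ b : Fin n → M.Carrier,
      N.eval n (CFormula.inf φ) (f.toFun ∘ b) = M.eval n (CFormula.inf φ) b

/-- `T'` is the model companion of `T`: the models of `T'` are exactly the
existentially closed models of `T`. -/
def IsModelCompanion {S : CSig} (T T' : CTheory S) : Prop :=
  ∀ M : CStructure S, (M.SatT T' ↔ IsEC T M)

/-- `T'` is ℵ₀-categorical: any two separable models of `T'` are isomorphic. -/
def Aleph0Categorical {S : CSig} (T' : CTheory S) : Prop :=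
  ∀ M N : CStructure S, M.SatT T' → N.SatT T' →
    TopologicalSpace.SeparableSpace M.Carrier → TopologicalSpace.SeparableSpace N.Carrier →
    ∃ f : CEmbedding M N, Function.Surjective f.toFun

/-! ### The Polish space `𝔖` of codes of separable structures -/

/-- A point of `𝔖`: a separable continuous `L`-structure presented on a distinguished
countable dense subset indexed by `ℕ` — i.e. the metric and all predicate values on `ℕ`,
subject to the metric axioms and the uniform-continuity moduli. The actual structure is
the completion; since all predicates and the quantifiers are continuous, all the
first-order data is determined by this code. -/
structure SCode (S : CSig) where
  dd : ℕ → ℕ → ℝ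
  R : ∀ i, (Fin (S.arity i) → ℕ) → ℝ
  dd_nonneg : ∀ i j, 0 ≤ dd i j
  dd_le_one : ∀ i j, dd i j ≤ 1
  dd_self : ∀ i, dd i i = 0
  dd_pos : ∀ i j, i ≠ j → 0 < dd i j
  dd_symm : ∀ i j, dd i j = dd j i
  dd_triangle : ∀ i j k, dd i k ≤ dd i j + dd j k
  R_nonneg : ∀ i v, 0 ≤ R i v
  R_le_one : ∀ i v, R i v ≤ 1
  R_uc : ∀ i (ε : ℝ), 0 < ε → ∀ v w,
    (∀ j, dd (v j) (w j) < S.modulus i ε) → |R i v - R i w| ≤ ε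

/-- Value of a formula on a code, under an assignment of variables to points of the
distinguished dense subset; quantifiers range over the dense subset (equivalently,
by uniform continuity, over the completion). -/
noncomputable def SCode.eval {S : CSig} (x : SCode S) :
    ∀ (n : ℕ), CFormula S n → (Fin n → ℕ) → ℝ
  | _, .dst a b, v => x.dd (v a) (v b)
  | _, .rel i ts, v => x.R i fun j => v (ts j)
  | _, .const q, _ => clampQ q
  | n, .fmin φ ψ, v => min (x.eval n φ v) (x.eval n ψ v)
  | n, .fmax φ ψ, v => max (x.eval n φ v) (x.eval n ψ v)
  | n, .neg φ, v => 1 - x.eval n φ v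
  | n, .addT φ ψ, v => min 1 (x.eval n φ v + x.eval n ψ v)
  | n, .subT φ ψ, v => max 0 (x.eval n φ v - x.eval n ψ v)
  | n, .absd φ ψ, v => |x.eval n φ v - x.eval n ψ v|
  | n, .scale q φ, v => clampQ q * x.eval n φ v
  | n, .inf φ, v => ⨅ k : ℕ, x.eval (n + 1) φ (Fin.snoc v k)
  | n, .sup φ, v => ⨆ k : ℕ, x.eval (n + 1) φ (Fin.snoc v k)

/-- The value of a sentence on a code. -/
noncomputable def SCode.sval {S : CSig} (x : SCode S) (φ : CSentence S) : ℝ :=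
  x.eval 0 φ (fun i => i.elim0)

/-- The structure coded by `x` satisfies the theory `T`. -/
def SCode.SatT {S : CSig} (x : SCode S) (T : CTheory S) : Prop :=
  ∀ c ∈ T, x.sval c.1 ≤ c.2

/-- The basic open set `U_{φ(ā),ε} = {x ∈ 𝔖 : φ^x(ā) < ε}`. -/
def basicSet {S : CSig} (n : ℕ) (φ : CFormula S n) (a : Fin n → ℕ) (ε : ℝ) :
    Set (SCode S) :=
  {x | x.eval n φ a < ε}

/-- The topology on `𝔖` generated by the basic open sets `U_{φ(ā),ε}` for `φ`
quantifier-free, `ā` a tuple from the distinguished dense subset and `ε > 0`. -/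
instance SCode.topologicalSpace (S : CSig) : TopologicalSpace (SCode S) :=
  TopologicalSpace.generateFrom
    {U | ∃ (n : ℕ) (φ : CFormula S n) (a : Fin n → ℕ) (ε : ℝ),
      IsQF φ ∧ 0 < ε ∧ U = basicSet n φ a ε}

/-- `x` codes the structure `M`: the distinguished countable dense subset maps to a dense
sequence in `M` realizing exactly the metric and predicate values recorded in `x`
(i.e. `M` is "the completion" of `x`). For a fixed `M`, `{x ∈ 𝔖 : Codes x M}` is
precisely the isomorphism class of `M` in `𝔖`. -/
def Codes {S : CSig} (x : SCode S) (M : CStructure S) : Prop :=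
  ∃ u : ℕ → M.Carrier, DenseRange u ∧ (∀ i j, dist (u i) (u j) = x.dd i j) ∧
    ∀ i (v : Fin (S.arity i) → ℕ), M.rel i (u ∘ v) = x.R i v

/-! The value of a quantifier-free formula at a tuple from the dense subset is a continuous
function of finitely many of the numbers `dd i j`, `R i v`, and it lies in `[0,1]`, so its
strict sub- and superlevel sets are basic open sets or empty. Hence the topology of `𝔖` is
exactly the one induced by these coordinates from a countable product of copies of `ℝ`. There
all axioms of a code are closed conditions except `0 < dd i j` for `i ≠ j`, which becomes
closed once the reciprocals `(dd i j)⁻¹` are recorded as further coordinates; so `𝔖` is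
homeomorphic to a closed subset of a Polish space. -/

lemma clampQ_mem_Icc (q : ℚ) : clampQ q ∈ Set.Icc 0 1 :=
  ⟨le_max_left _ _, max_le zero_le_one (min_le_left _ _)⟩

namespace SCode

variable {S : CSig}

lemma eval_mem_Icc_of_isQF (x : SCode S) {n : ℕ} {φ : CFormula S n} (hφ : IsQF φ)
    (v : Fin n → ℕ) : x.eval n φ v ∈ Set.Icc 0 1 := by
  induction hφ with
  | dst a b => exact ⟨x.dd_nonneg _ _, x.dd_le_one _ _⟩
  | rel i ts => exact ⟨x.R_nonneg _ _, x.R_le_one _ _⟩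
  | const q => exact clampQ_mem_Icc q
  | fmin _ _ ih₁ ih₂ => exact ⟨le_min ih₁.1 ih₂.1, min_le_of_left_le ih₁.2⟩
  | fmax _ _ ih₁ ih₂ => exact ⟨le_max_of_le_left ih₁.1, max_le ih₁.2 ih₂.2⟩
  | neg _ ih => exact ⟨sub_nonneg.2 ih.2, sub_le_self _ ih.1⟩
  | addT _ _ ih₁ ih₂ =>
    exact ⟨le_min zero_le_one (add_nonneg ih₁.1 ih₂.1), min_le_left _ _⟩
  | subT _ _ ih₁ ih₂ =>
    exact ⟨le_max_left _ _, max_le zero_le_one (by linarith [ih₁.2, ih₂.1])⟩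
  | absd _ _ ih₁ ih₂ =>
    exact ⟨abs_nonneg _, abs_sub_le_iff.2 ⟨by linarith [ih₁.2, ih₂.1],
      by linarith [ih₁.1, ih₂.2]⟩⟩
  | scale q _ ih =>
    exact ⟨mul_nonneg (clampQ_mem_Icc q).1 ih.1,
      mul_le_one₀ (clampQ_mem_Icc q).2 ih.1 ih.2⟩

lemma isOpen_basicSet {n : ℕ} {φ : CFormula S n} (hφ : IsQF φ) (a : Fin n → ℕ) {ε : ℝ}
    (hε : 0 < ε) : IsOpen (basicSet n φ a ε) :=
  TopologicalSpace.GenerateOpen.basic _ ⟨n, φ, a, ε, hφ, hε, rfl⟩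

lemma continuous_eval_of_isQF {n : ℕ} {φ : CFormula S n} (hφ : IsQF φ) (v : Fin n → ℕ) :
    Continuous fun x : SCode S => x.eval n φ v := by
  have hIcc x := eval_mem_Icc_of_isQF x hφ v
  refine continuous_iff_lower_upperSemicontinuous.2
    ⟨lowerSemicontinuous_iff_isOpen_preimage.2 fun ε => ?_,
      upperSemicontinuous_iff_isOpen_preimage.2 fun ε => ?_⟩
  · rcases lt_or_ge ε 1 with hε | hε
    · convert isOpen_basicSet hφ.neg v (sub_pos.2 hε) using 1
      ext x
      simp only [Set.mem_preimage, Set.mem_Ioi, basicSet, Set.mem_ofPred_eq, eval,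
        sub_lt_sub_iff_left]
    · convert isOpen_empty
      exact Set.eq_empty_of_forall_notMem fun x hx => (hIcc x).2.not_gt (hε.trans_lt hx)
  · rcases lt_or_ge 0 ε with hε | hε
    · exact isOpen_basicSet hφ v hε
    · convert isOpen_empty
      exact Set.eq_empty_of_forall_notMem fun x hx => (hIcc x).1.not_gt (hx.trans_le hε)

section

variable {X : Type*} [TopologicalSpace X] {c : X → SCode S}

lemma continuous_eval_comp_of_isQF (hd : ∀ i j, Continuous fun x => (c x).dd i j)
    (hR : ∀ i v, Continuous fun x => (c x).R i v) {n : ℕ} {φ : CFormula S n} (hφ : IsQF φ)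
    (v : Fin n → ℕ) : Continuous fun x => (c x).eval n φ v := by
  induction hφ with
  | dst a b => exact hd _ _
  | rel i ts => exact hR _ _
  | const q => exact continuous_const
  | fmin _ _ ih₁ ih₂ => exact ih₁.min ih₂
  | fmax _ _ ih₁ ih₂ => exact ih₁.max ih₂
  | neg _ ih => exact continuous_const.sub ih
  | addT _ _ ih₁ ih₂ => exact continuous_const.min (ih₁.add ih₂)
  | subT _ _ ih₁ ih₂ => exact continuous_const.max (ih₁.sub ih₂)
  | absd _ _ ih₁ ih₂ => exact (ih₁.sub ih₂).abs
  | scale q _ ih => exact continuous_const.mul ih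

theorem continuous_iff : Continuous c ↔
    (∀ i j, Continuous fun x => (c x).dd i j) ∧ ∀ i v, Continuous fun x => (c x).R i v := by
  refine ⟨fun hc => ⟨fun i j => ?_, fun i v => ?_⟩, fun ⟨hd, hR⟩ => ?_⟩
  · exact (continuous_eval_of_isQF (IsQF.dst 0 1) ![i, j]).comp hc
  · exact (continuous_eval_of_isQF (IsQF.rel i id) v).comp hc
  · refine continuous_generateFrom_iff.2 ?_
    rintro _ ⟨n, φ, a, ε, hφ, -, rfl⟩
    exact isOpen_lt (continuous_eval_comp_of_isQF hd hR hφ a) continuous_const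

end

@[fun_prop]
lemma continuous_dd (i j : ℕ) : Continuous fun x : SCode S => x.dd i j :=
  (continuous_iff.1 continuous_id).1 i j

@[fun_prop]
lemma continuous_R (i : ℕ) (v : Fin (S.arity i) → ℕ) : Continuous fun x : SCode S => x.R i v :=
  (continuous_iff.1 continuous_id).2 i v

abbrev CodeSpace (S : CSig) : Type :=
  (ℕ → ℕ → ℝ) × (∀ i : ℕ, (Fin (S.arity i) → ℕ) → ℝ) × (ℕ → ℕ → ℝ)

def codeSet (S : CSig) : Set (CodeSpace S) :=
  {p | (∀ i j, 0 ≤ p.1 i j) ∧ (∀ i j, p.1 i j ≤ 1) ∧ (∀ i, p.1 i i = 0) ∧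
    (∀ i j, i ≠ j → p.2.2 i j * p.1 i j = 1) ∧
    (∀ i j, p.1 i j = p.1 j i) ∧ (∀ i j k, p.1 i k ≤ p.1 i j + p.1 j k) ∧
    (∀ i v, 0 ≤ p.2.1 i v) ∧ (∀ i v, p.2.1 i v ≤ 1) ∧
    (∀ i (ε : ℝ), 0 < ε → ∀ v w,
      (∀ j, p.1 (v j) (w j) < S.modulus i ε) → |p.2.1 i v - p.2.1 i w| ≤ ε) ∧
    ∀ i, p.2.2 i i = 0}

lemma isClosed_codeSet : IsClosed (codeSet S) := by
  have huc i ε v w : IsClosed {p : CodeSpace S |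
      (∀ j, p.1 (v j) (w j) < S.modulus i ε) → |p.2.1 i v - p.2.1 i w| ≤ ε} :=
    isClosed_imp (by simpa only [Set.ofPred_forall] using
        isOpen_iInter_of_finite fun j => isOpen_lt (by fun_prop) continuous_const)
      (isClosed_le (by fun_prop) continuous_const)
  simp only [codeSet, Set.ofPred_and, Set.ofPred_forall]
  repeat' first
    | apply IsClosed.inter
    | refine isClosed_iInter fun _ => ?_
    | exact huc ..
    | apply isClosed_le
    | apply isClosed_eq
    | fun_prop

-- `(x.dd i i)⁻¹ = 0⁻¹ = 0`, matching the last condition of `codeSet`.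
noncomputable def toCodeSpace (x : SCode S) : CodeSpace S :=
  (x.dd, x.R, fun i j => (x.dd i j)⁻¹)

lemma toCodeSpace_fst (x : SCode S) : x.toCodeSpace.1 = x.dd := rfl
lemma toCodeSpace_snd_fst (x : SCode S) : x.toCodeSpace.2.1 = x.R := rfl

lemma toCodeSpace_mem_codeSet (x : SCode S) : x.toCodeSpace ∈ codeSet S :=
  ⟨x.dd_nonneg, x.dd_le_one, x.dd_self, fun i j hij => inv_mul_cancel₀ (x.dd_pos i j hij).ne',
    x.dd_symm, x.dd_triangle, x.R_nonneg, x.R_le_one, x.R_uc,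
    fun i => by simp [toCodeSpace, x.dd_self]⟩

lemma toCodeSpace_injective : Function.Injective (toCodeSpace : SCode S → CodeSpace S) := by
  rintro ⟨⟩ ⟨⟩ h
  simp only [toCodeSpace, Prod.mk.injEq] at h
  obtain ⟨rfl, rfl, -⟩ := h
  rfl

lemma range_toCodeSpace : Set.range (toCodeSpace : SCode S → CodeSpace S) = codeSet S := by
  refine (Set.range_subset_iff.2 toCodeSpace_mem_codeSet).antisymm ?_
  rintro p ⟨h0, h1, hself, hinv, hsymm, htri, hR0, hR1, huc, hdiag⟩
  have hpos i j (hij : i ≠ j) : 0 < p.1 i j :=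
    (h0 i j).lt_of_ne (right_ne_zero_of_mul_eq_one (hinv i j hij)).symm
  refine ⟨⟨p.1, p.2.1, h0, h1, hself, hpos, hsymm, htri, hR0, hR1, huc⟩,
    Prod.ext rfl (Prod.ext rfl (funext₂ fun i j => ?_))⟩
  rcases eq_or_ne i j with rfl | hij
  · exact (congrArg _ (hself i)).trans (inv_zero.trans (hdiag i).symm)
  · exact (eq_inv_of_mul_eq_one_left (hinv i j hij)).symm

lemma continuous_toCodeSpace : Continuous (toCodeSpace : SCode S → CodeSpace S) := by
  have hinv i j : Continuous fun x : SCode S => (x.dd i j)⁻¹ := by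
    rcases eq_or_ne i j with rfl | hij
    · simpa [dd_self] using continuous_const
    · exact (continuous_dd i j).inv₀ fun x => (x.dd_pos i j hij).ne'
  unfold toCodeSpace
  fun_prop

noncomputable def homeomorphRangeToCodeSpace (S : CSig) :
    SCode S ≃ₜ Set.range (toCodeSpace : SCode S → CodeSpace S) where
  toEquiv := Equiv.ofInjective _ toCodeSpace_injective
  continuous_toFun := continuous_toCodeSpace.subtype_mk _
  continuous_invFun := by
    refine continuous_iff.2 ⟨fun i j => ?_, fun i v => ?_⟩ <;>
    · simp only [Equiv.invFun_as_coe, ← toCodeSpace_fst, ← toCodeSpace_snd_fst,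
        Equiv.apply_ofInjective_symm]
      fun_prop

end SCode

/-- The space `𝔖` of all separable continuous `L`-structures with a
distinguished countable dense subset indexed by `ℕ`, topologized by the basic open sets
`U_{φ(ā),ε}` for quantifier-free `φ`, tuples `ā` from the dense subset and `ε > 0`,
is a Polish space. -/
theorem polishSpace_SCode (S : CSig) : PolishSpace (SCode S) :=
  haveI : PolishSpace (Set.range (SCode.toCodeSpace : SCode S → _)) :=
    SCode.range_toCodeSpace (S := S) ▸ SCode.isClosed_codeSet.polishSpace
  (SCode.homeomorphRangeToCodeSpace S).isClosedEmbedding.polishSpace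
end

section
/- For every (n+1)×(n+1) distance matrix (r_{ij}) of a finite metric space of diameter ≤ 1 and every ε > 0 there exists δ > 0 such that: whenever a₁, …, aₙ are points of 𝕌 with |d(aᵢ,aⱼ) − r_{ij}| < δ for all 1 ≤ i,j ≤ n, there exists a point a_{n+1} ∈ 𝕌 with |d(aᵢ,a_{n+1}) − r_{i,n+1}| ≤ ε for all 1 ≤ i ≤ n. -/
open TopologicalSpace

/-- The set `Met₁` of all metrics on `ℕ` with values in `[0,1]`, inside the product
space `[0,1]^{ℕ×ℕ}`. -/
def Met1 : Set ((ℕ × ℕ) → Set.Icc (0 : ℝ) 1) :=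
  {f | (∀ i, (f (i, i) : ℝ) = 0) ∧ (∀ i j, (f (i, j) : ℝ) = f (j, i)) ∧
    (∀ i j k, (f (i, k) : ℝ) ≤ f (i, j) + f (j, k)) ∧
    ∀ i j, i ≠ j → (0 : ℝ) < f (i, j)}

/-- The approximate one-point extension property for a metric space of diameter `≤ 1`:
every metrically consistent prescription of distances to a finite tuple is realized
up to any `ε > 0`. -/
def ApproxExtProp (M : Type) [MetricSpace M] : Prop :=
  ∀ (n : ℕ) (a : Fin n → M) (r : Fin n → ℝ),
    (∀ i, 0 ≤ r i ∧ r i ≤ 1) →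
    (∀ i j, |r i - r j| ≤ dist (a i) (a j) ∧ dist (a i) (a j) ≤ r i + r j) →
    ∀ ε : ℝ, 0 < ε → ∃ y : M, ∀ i, |dist y (a i) - r i| ≤ ε

/-- The exact one-point extension property for a metric space of diameter `≤ 1`:
every metrically consistent prescription of distances to a finite tuple is realized
exactly. -/
def ExactExtProp (M : Type) [MetricSpace M] : Prop :=
  ∀ (n : ℕ) (a : Fin n → M) (r : Fin n → ℝ),
    (∀ i, 0 ≤ r i ∧ r i ≤ 1) →
    (∀ i j, |r i - r j| ≤ dist (a i) (a j) ∧ dist (a i) (a j) ≤ r i + r j) →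
    ∃ y : M, ∀ i, dist y (a i) = r i

/-- `U` is (a copy of) the Urysohn space of diameter 1: a complete separable metric
space with all distances `≤ 1` satisfying the exact one-point extension property. -/
def IsUrysohn (U : Type) [MetricSpace U] : Prop :=
  CompleteSpace U ∧ SeparableSpace U ∧ (∀ x y : U, dist x y ≤ 1) ∧ ExactExtProp U

/-! The 1-Lipschitz minorant `g i = min_j (ρ j + d(aᵢ, aⱼ))` of the prescribed distances `ρ`,
raised by `ε` and capped at `1`, is an exact Katětov function on the `aᵢ` whenever `ρ` is one up
to an error `ε`; a point realizing it exactly realizes `ρ` up to `ε`. -/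

section LipschitzMinorant

variable {X ι : Type*} [PseudoMetricSpace X] [Finite ι] (a : ι → X) (ρ : ι → ℝ)

/-- The largest function `g ≤ ρ` with `g i ≤ g j + dist (a i) (a j)` (McShane's construction). -/
noncomputable def lipschitzMinorant (i : ι) : ℝ :=
  ⨅ j, (ρ j + dist (a i) (a j))

theorem lipschitzMinorant_le_add (i j : ι) :
    lipschitzMinorant a ρ i ≤ ρ j + dist (a i) (a j) :=
  ciInf_le (Finite.bddBelow_range _) j

theorem exists_lipschitzMinorant_eq (i : ι) :
    ∃ j, lipschitzMinorant a ρ i = ρ j + dist (a i) (a j) :=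
  have : Nonempty ι := ⟨i⟩
  (exists_eq_ciInf_of_finite).imp fun _ h => h.symm

theorem lipschitzMinorant_le (i : ι) : lipschitzMinorant a ρ i ≤ ρ i := by
  simpa using lipschitzMinorant_le_add a ρ i i

theorem lipschitzMinorant_le_lipschitzMinorant_add (i j : ι) :
    lipschitzMinorant a ρ i ≤ lipschitzMinorant a ρ j + dist (a i) (a j) := by
  obtain ⟨k, hk⟩ := exists_lipschitzMinorant_eq a ρ j
  calc lipschitzMinorant a ρ i ≤ ρ k + dist (a i) (a k) := lipschitzMinorant_le_add a ρ i k
    _ ≤ ρ k + (dist (a i) (a j) + dist (a j) (a k)) := by gcongr; exact dist_triangle _ _ _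
    _ = lipschitzMinorant a ρ j + dist (a i) (a j) := by rw [hk]; ring

theorem sub_le_lipschitzMinorant {δ : ℝ} (h : ∀ i j, ρ i ≤ ρ j + dist (a i) (a j) + δ) (i : ι) :
    ρ i - δ ≤ lipschitzMinorant a ρ i := by
  obtain ⟨j, hj⟩ := exists_lipschitzMinorant_eq a ρ i
  linarith [h i j]

theorem dist_le_lipschitzMinorant_add {δ : ℝ} (h : ∀ i j, dist (a i) (a j) ≤ ρ i + ρ j + δ)
    (i j : ι) : dist (a i) (a j) ≤ lipschitzMinorant a ρ i + lipschitzMinorant a ρ j + δ := by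
  obtain ⟨p, hp⟩ := exists_lipschitzMinorant_eq a ρ i
  obtain ⟨q, hq⟩ := exists_lipschitzMinorant_eq a ρ j
  have hpq := h p q
  calc dist (a i) (a j) ≤ dist (a i) (a p) + dist (a p) (a q) + dist (a q) (a j) :=
        dist_triangle4 _ _ _ _
    _ ≤ lipschitzMinorant a ρ i + lipschitzMinorant a ρ j + δ := by
        rw [hp, hq, dist_comm (a q)]; linarith

end LipschitzMinorant

/-- Katětov's condition, in the form of the hypothesis of `ExactExtProp`. -/
def IsKatetovOn {X ι : Type*} [PseudoMetricSpace X] (a : ι → X) (f : ι → ℝ) : Prop :=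
  ∀ i j, |f i - f j| ≤ dist (a i) (a j) ∧ dist (a i) (a j) ≤ f i + f j

theorem isKatetovOn_min_one_add {X ι : Type*} [PseudoMetricSpace X] (a : ι → X)
    (hdiam : ∀ i j, dist (a i) (a j) ≤ 1) {g : ι → ℝ} {c : ℝ} (hg : ∀ i, 0 ≤ c + g i)
    (hlip : ∀ i j, g i ≤ g j + dist (a i) (a j))
    (htri : ∀ i j, dist (a i) (a j) ≤ g i + g j + 2 * c) :
    IsKatetovOn a fun i => min 1 (c + g i) := by
  have hlip' : ∀ i j, min 1 (c + g i) ≤ min 1 (c + g j) + dist (a i) (a j) := fun i j =>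
    min_le_iff.2 <| by
      rcases min_cases 1 (c + g j) with ⟨h, -⟩ | ⟨h, -⟩ <;> rw [h]
      · exact .inl (le_add_of_nonneg_right dist_nonneg)
      · exact .inr (by linarith [hlip i j])
  intro i j
  dsimp only
  refine ⟨abs_sub_le_iff.2 ⟨?_, ?_⟩, ?_⟩
  · linarith [hlip' i j]
  · linarith [hlip' j i, dist_comm (a i) (a j)]
  · rcases min_cases 1 (c + g i) with ⟨hi, -⟩ | ⟨hi, -⟩ <;>
    rcases min_cases 1 (c + g j) with ⟨hj, -⟩ | ⟨hj, -⟩ <;> rw [hi, hj] <;>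
    linarith [hdiam i j, hg i, hg j, htri i j]

theorem ExactExtProp.exists_abs_dist_sub_le {M : Type} [MetricSpace M] (hext : ExactExtProp M)
    (hdiam : ∀ x y : M, dist x y ≤ 1) {n : ℕ} (a : Fin n → M) (ρ : Fin n → ℝ)
    (hρ₀ : ∀ i, 0 ≤ ρ i) (hρ₁ : ∀ i, ρ i ≤ 1) {ε : ℝ} (hε : 0 ≤ ε)
    (hlip : ∀ i j, ρ i ≤ ρ j + dist (a i) (a j) + ε)
    (htri : ∀ i j, dist (a i) (a j) ≤ ρ i + ρ j + ε) :
    ∃ y, ∀ i, |dist (a i) y - ρ i| ≤ ε := by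
  set g := lipschitzMinorant a ρ
  have hρg : ∀ i, ρ i ≤ ε + g i := fun i => by linarith [sub_le_lipschitzMinorant a ρ hlip i]
  obtain ⟨y, hy⟩ := hext n a (fun i => min 1 (ε + g i))
    (fun i => ⟨le_min zero_le_one ((hρ₀ i).trans (hρg i)), min_le_left _ _⟩)
    (isKatetovOn_min_one_add a (fun _ _ => hdiam _ _) (fun i => (hρ₀ i).trans (hρg i))
      (lipschitzMinorant_le_lipschitzMinorant_add a ρ)
      fun i j => by linarith [dist_le_lipschitzMinorant_add a ρ htri i j])
  refine ⟨y, fun i => abs_sub_le_iff.2 ⟨?_, ?_⟩⟩ <;> rw [dist_comm, hy i]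
  · linarith [min_le_right 1 (ε + g i), lipschitzMinorant_le a ρ i]
  · linarith [le_min (hρ₁ i) (hρg i)]

theorem urysohn_approx_extension_general (U : Type) [MetricSpace U] (hU : IsUrysohn U)
    (n : ℕ) (r : Fin (n + 1) → Fin (n + 1) → ℝ)
    (hsymm : ∀ i j, r i j = r j i)
    (htri : ∀ i j k, r i k ≤ r i j + r j k)
    (hpos : ∀ i j, i ≠ j → 0 < r i j) (hle : ∀ i j, r i j ≤ 1)
    (ε : ℝ) (hε : 0 < ε) :
    ∃ δ : ℝ, 0 < δ ∧ ∀ a : Fin n → U,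
      (∀ i j : Fin n, |dist (a i) (a j) - r i.castSucc j.castSucc| < δ) →
      ∃ b : U, ∀ i : Fin n, |dist (a i) b - r i.castSucc (Fin.last n)| ≤ ε := by
  obtain ⟨-, -, hdiam, hext⟩ := hU
  refine ⟨ε, hε, fun a ha => ?_⟩
  have hclose := fun i j => abs_lt.1 (ha i j)
  refine hext.exists_abs_dist_sub_le hdiam a _
    (fun i => (hpos _ _ (Fin.castSucc_lt_last i).ne).le) (fun i => hle _ _) hε.le
    (fun i j => ?_) (fun i j => ?_)
  · linarith [htri i.castSucc j.castSucc (Fin.last n), hclose i j]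
  · linarith [htri i.castSucc (Fin.last n) j.castSucc, hsymm (Fin.last n) j.castSucc, hclose i j]

/-- For every `(n+1) × (n+1)` distance matrix `r` of a finite metric
space of diameter `≤ 1` and every `ε > 0` there is `δ > 0` such that: whenever
`a₁, …, aₙ ∈ 𝕌` satisfy `|d(aᵢ,aⱼ) − r_{ij}| < δ` for all `i, j ≤ n`, there is a point
`b ∈ 𝕌` with `|d(aᵢ,b) − r_{i,n+1}| ≤ ε` for all `i ≤ n`. -/
theorem urysohn_approx_extension (U : Type) [MetricSpace U] (hU : IsUrysohn U)
    (n : ℕ) (r : Fin (n + 1) → Fin (n + 1) → ℝ)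
    (hself : ∀ i, r i i = 0) (hsymm : ∀ i j, r i j = r j i)
    (htri : ∀ i j k, r i k ≤ r i j + r j k)
    (hpos : ∀ i j, i ≠ j → 0 < r i j) (hle : ∀ i j, r i j ≤ 1)
    (ε : ℝ) (hε : 0 < ε) :
    ∃ δ : ℝ, 0 < δ ∧ ∀ a : Fin n → U,
      (∀ i j : Fin n, |dist (a i) (a j) - r i.castSucc j.castSucc| < δ) →
      ∃ b : U, ∀ i : Fin n, |dist (a i) b - r i.castSucc (Fin.last n)| ≤ ε :=
  urysohn_approx_extension_general U hU n r hsymm htri hpos hle ε hε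
end

section
/- Any two complete separable metric spaces of diameter ≤ 1, each satisfying the approximate one-point extension property, are isometric. (Hence the Urysohn space of diameter 1 is the unique complete separable metric space of diameter ≤ 1 with this property.) -/
/-!
Two steps. First, completeness upgrades the approximate extension property to the exact one:
to realize distances `r` to `a₁, …, aₙ`, start from an approximate solution `z` with error
`s = maxᵢ |d(z, aᵢ) - rᵢ|`, and ask for a point at distance `rᵢ` from each `aᵢ` and at distance
`s` from `z`. This prescription is again consistent, so it can be met up to any `ε`; iterating
with `ε = 2⁻ᵏ` yields a Cauchy sequence whose limit is an exact solution.

Second, the exact property in both spaces makes every finite distance-preserving relation between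
`U` and `V` extendable by any point of `U` or of `V`, so a back-and-forth along countable dense
sets produces a distance-preserving relation with dense projections. It extends by continuity to an
isometric embedding `U → V` whose range is dense and, by completeness of `U`, closed.
-/

open TopologicalSpace

open Filter Topology

section Consistency

variable {M : Type*} [PseudoMetricSpace M]

def IsMetricallyConsistent {ι : Type*} (a : ι → M) (r : ι → ℝ) : Prop :=
  ∀ i j, |r i - r j| ≤ dist (a i) (a j) ∧ dist (a i) (a j) ≤ r i + r j

lemma IsMetricallyConsistent.nonneg {ι : Type*} {a : ι → M} {r : ι → ℝ}
    (h : IsMetricallyConsistent a r) (i : ι) : 0 ≤ r i := by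
  linarith [(h i i).2, dist_nonneg (x := a i) (y := a i)]

lemma IsMetricallyConsistent.snoc {n : ℕ} {a : Fin n → M} {r : Fin n → ℝ}
    (h : IsMetricallyConsistent a r) {z : M} {s : ℝ} (hs : 0 ≤ s)
    (hz : ∀ i, |s - r i| ≤ dist z (a i) ∧ dist z (a i) ≤ s + r i) :
    IsMetricallyConsistent (Fin.snoc (α := fun _ => M) a z) (Fin.snoc (α := fun _ => ℝ) r s) := by
  intro i j
  induction i using Fin.lastCases <;> induction j using Fin.lastCases <;>
    simp only [Fin.snoc_last, Fin.snoc_castSucc]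
  · simp [hs]
  · exact hz _
  · rw [abs_sub_comm, dist_comm, add_comm]
    exact hz _
  · exact h _ _

lemma IsMetricallyConsistent.dist_le_add {ι : Type*} [Fintype ι] {a : ι → M} {r : ι → ℝ}
    (h : IsMetricallyConsistent a r) (z : M) (i : ι) :
    dist (fun j => dist z (a j)) r ≤ r i + dist z (a i) := by
  refine (dist_pi_le_iff (add_nonneg (h.nonneg i) dist_nonneg)).2 fun j => ?_
  rw [Real.dist_eq, abs_sub_le_iff]
  constructor
  · linarith [dist_triangle z (a i) (a j), (h i j).2]
  · linarith [le_abs_self (r j - r i), (h j i).1, dist_triangle (a j) z (a i), dist_comm (a j) z]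

end Consistency

theorem exists_le_zero_of_forall_exists_dist_le {X : Type*} [PseudoMetricSpace X]
    [CompleteSpace X] [Nonempty X] {e : X → ℝ} (he : Continuous e)
    (h : ∀ x, ∀ ε > 0, ∃ y, e y ≤ ε ∧ dist x y ≤ e x + ε) : ∃ x, e x ≤ 0 := by
  choose! f hfe hfd using h
  let x : ℕ → X := fun k =>
    Nat.rec (f (Classical.arbitrary X) 1) (fun k y => f y ((1 / 2) ^ (k + 1))) k
  have hex : ∀ k, e (x k) ≤ (1 / 2) ^ k := by
    rintro (_ | k)
    · rw [pow_zero]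
      exact hfe _ 1 one_pos
    · exact hfe _ _ (by positivity)
  have hcauchy : CauchySeq x := cauchySeq_of_le_geometric (1 / 2) 2 (by norm_num) fun k =>
    calc dist (x k) (x (k + 1)) ≤ e (x k) + (1 / 2) ^ (k + 1) := hfd _ _ (by positivity)
      _ ≤ 2 * (1 / 2) ^ k := by rw [pow_succ]; linarith [hex k, pow_pos (one_half_pos (α := ℝ)) k]
  obtain ⟨y, hy⟩ := cauchySeq_tendsto_of_complete hcauchy
  exact ⟨y, le_of_tendsto_of_tendsto' ((he.tendsto y).comp hy)
    (tendsto_pow_atTop_nhds_zero_of_lt_one (by norm_num) (by norm_num)) hex⟩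

section ExtensionProperties

variable {M : Type} [MetricSpace M]

lemma ApproxExtProp.exists_dist_le (hM : ApproxExtProp M) (hdiam : ∀ x y : M, dist x y ≤ 1)
    {n : ℕ} {a : Fin n → M} {r : Fin n → ℝ} (hr : ∀ i, 0 ≤ r i ∧ r i ≤ 1)
    (h : IsMetricallyConsistent a r) (z : M) {ε : ℝ} (hε : 0 < ε) :
    ∃ y, dist (fun i => dist y (a i)) r ≤ ε ∧ dist z y ≤ dist (fun i => dist z (a i)) r + ε := by
  set s := dist (fun i => dist z (a i)) r
  have hs1 : s ≤ 1 := (dist_pi_le_iff zero_le_one).2 fun i => by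
    rw [Real.dist_eq, abs_sub_le_iff]
    constructor <;> linarith [hdiam z (a i), dist_nonneg (x := z) (y := a i), hr i]
  have hz : ∀ i, |s - r i| ≤ dist z (a i) ∧ dist z (a i) ≤ s + r i := fun i => by
    have hi := dist_le_pi_dist (fun j => dist z (a j)) r i
    rw [Real.dist_eq, abs_sub_le_iff] at hi
    exact ⟨abs_sub_le_iff.2 ⟨by linarith [h.dist_le_add z i], by linarith⟩, by linarith⟩
  have hr' : ∀ i, 0 ≤ Fin.snoc (α := fun _ => ℝ) r s i ∧ Fin.snoc (α := fun _ => ℝ) r s i ≤ 1 := by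
    intro i
    induction i using Fin.lastCases <;> simp only [Fin.snoc_last, Fin.snoc_castSucc]
    · exact ⟨dist_nonneg, hs1⟩
    · exact hr _
  obtain ⟨y, hy⟩ := hM (n + 1) _ _ hr' (h.snoc dist_nonneg hz) ε hε
  refine ⟨y, (dist_pi_le_iff hε.le).2 fun i => ?_, ?_⟩
  · simpa [Real.dist_eq] using hy i.castSucc
  · have hlast := abs_sub_le_iff.1 (hy (Fin.last n))
    simp only [Fin.snoc_last] at hlast
    rw [dist_comm]
    linarith

theorem ApproxExtProp.exactExtProp [CompleteSpace M] (hM : ApproxExtProp M)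
    (hdiam : ∀ x y : M, dist x y ≤ 1) : ExactExtProp M := by
  intro n a r hr h
  have : Nonempty M := ⟨(hM n a r hr h 1 one_pos).choose⟩
  obtain ⟨y, hy⟩ := exists_le_zero_of_forall_exists_dist_le
    (e := fun y => dist (fun i => dist y (a i)) r) (by fun_prop)
    fun z _ hε => hM.exists_dist_le hdiam hr h z hε
  exact ⟨y, congrFun (dist_le_zero.1 hy)⟩

lemma ExactExtProp.exists_forall_dist_eq (hM : ExactExtProp M) {ι : Type*} [Finite ι] (a : ι → M)
    (r : ι → ℝ) (hr : ∀ i, 0 ≤ r i ∧ r i ≤ 1) (h : IsMetricallyConsistent a r) :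
    ∃ y, ∀ i, dist y (a i) = r i := by
  obtain ⟨n, ⟨e⟩⟩ := Finite.exists_equiv_fin ι
  obtain ⟨y, hy⟩ := hM n (a ∘ e.symm) (r ∘ e.symm) (fun _ => hr _) fun _ _ => h _ _
  exact ⟨y, fun i => by simpa using hy (e i)⟩

lemma ExactExtProp.exists_forall_dist_eq_dist {N : Type} [MetricSpace N] (hM : ExactExtProp M)
    (hdiam : ∀ x y : N, dist x y ≤ 1) {ι : Type*} [Finite ι] {x : ι → N} {y : ι → M}
    (hxy : ∀ i j, dist (x i) (x j) = dist (y i) (y j)) (p : N) :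
    ∃ q, ∀ i, dist q (y i) = dist p (x i) :=
  hM.exists_forall_dist_eq y _ (fun _ => ⟨dist_nonneg, hdiam _ _⟩) fun i j => by
    rw [← hxy, dist_comm p, dist_comm p]
    exact ⟨abs_dist_sub_le _ _ _, dist_triangle_right _ _ _⟩

end ExtensionProperties

lemma exists_seq_mem_tendsto_fst {α β : Type*} [PseudoMetricSpace α] {R : Set (α × β)}
    (hR : Dense (Prod.fst '' R)) (p : α) :
    ∃ w : ℕ → α × β, (∀ k, w k ∈ R) ∧ Tendsto (fun k => (w k).1) atTop (𝓝 p) := by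
  obtain ⟨x, hxR, hx⟩ := mem_closure_iff_seq_limit.1 (hR p)
  choose w hwR hw using hxR
  exact ⟨w, hwR, by simpa only [hw] using hx⟩

section DistPreserving

variable {α β : Type*} [PseudoMetricSpace α] [PseudoMetricSpace β] {R : Set (α × β)}

def IsDistPreserving (R : Set (α × β)) : Prop :=
  ∀ a ∈ R, ∀ b ∈ R, dist a.1 b.1 = dist a.2 b.2

lemma IsDistPreserving.insert (hR : IsDistPreserving R) {x : α} {y : β}
    (h : ∀ b ∈ R, dist x b.1 = dist y b.2) : IsDistPreserving (insert (x, y) R) := by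
  rintro a (rfl | ha) b (rfl | hb)
  · simp
  · exact h b hb
  · rw [dist_comm, h a ha, dist_comm]
  · exact hR a ha b hb

lemma IsDistPreserving.tendsto_dist_snd (hR : IsDistPreserving R) {w w' : ℕ → α × β}
    (hw : ∀ k, w k ∈ R) (hw' : ∀ k, w' k ∈ R) {p p' : α}
    (h : Tendsto (fun k => (w k).1) atTop (𝓝 p)) (h' : Tendsto (fun k => (w' k).1) atTop (𝓝 p')) :
    Tendsto (fun k => dist (w k).2 (w' k).2) atTop (𝓝 (dist p p')) :=
  (h.dist h').congr fun k => hR _ (hw k) _ (hw' k)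

lemma IsDistPreserving.cauchySeq_snd (hR : IsDistPreserving R) {w : ℕ → α × β}
    (hw : ∀ k, w k ∈ R) (h : CauchySeq fun k => (w k).1) : CauchySeq fun k => (w k).2 := by
  rw [cauchySeq_iff_tendsto_dist_atTop_0] at h ⊢
  exact h.congr fun n => hR _ (hw _) _ (hw _)

lemma IsDistPreserving.exists_tendsto_snd [CompleteSpace β] (hR : IsDistPreserving R)
    (hdense : Dense (Prod.fst '' R)) (p : α) :
    ∃ q : β, ∀ w : ℕ → α × β, (∀ k, w k ∈ R) → Tendsto (fun k => (w k).1) atTop (𝓝 p) →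
      Tendsto (fun k => (w k).2) atTop (𝓝 q) := by
  obtain ⟨w₀, hw₀R, hw₀⟩ := exists_seq_mem_tendsto_fst hdense p
  obtain ⟨q, hq⟩ := cauchySeq_tendsto_of_complete (hR.cauchySeq_snd hw₀R hw₀.cauchySeq)
  refine ⟨q, fun w hwR hw => hq.congr_dist ?_⟩
  simpa using hR.tendsto_dist_snd hw₀R hwR hw₀ hw

theorem IsDistPreserving.nonempty_isometryEquiv {U V : Type*} [MetricSpace U] [MetricSpace V]
    [CompleteSpace U] [CompleteSpace V] {R : Set (U × V)} (hR : IsDistPreserving R)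
    (hU : Dense (Prod.fst '' R)) (hV : Dense (Prod.snd '' R)) : Nonempty (U ≃ᵢ V) := by
  choose g hg using hR.exists_tendsto_snd hU
  have hiso : Isometry g := Isometry.of_dist_eq fun p p' => by
    obtain ⟨w, hwR, hw⟩ := exists_seq_mem_tendsto_fst hU p
    obtain ⟨w', hw'R, hw'⟩ := exists_seq_mem_tendsto_fst hU p'
    exact tendsto_nhds_unique ((hg p w hwR hw).dist (hg p' w' hw'R hw'))
      (hR.tendsto_dist_snd hwR hw'R hw hw')
  have hgR : Prod.snd '' R ⊆ Set.range g := by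
    rintro _ ⟨a, ha, rfl⟩
    exact ⟨a.1, tendsto_nhds_unique (hg a.1 (fun _ => a) (fun _ => ha) tendsto_const_nhds)
      tendsto_const_nhds⟩
  have hsurj : Function.Surjective g := by
    rw [← Set.range_eq_univ, ← hiso.isClosedEmbedding.isClosed_range.closure_eq,
      (hV.mono hgR).closure_eq]
  exact ⟨⟨Equiv.ofBijective g ⟨hiso.injective, hsurj⟩, hiso⟩⟩

end DistPreserving

section BackAndForth

variable {U V : Type} [MetricSpace U] [MetricSpace V]

lemma ExactExtProp.exists_isDistPreserving_insert_fst (hV : ExactExtProp V)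
    (hbU : ∀ x y : U, dist x y ≤ 1) {S : Set (U × V)} (hfin : S.Finite) (hS : IsDistPreserving S)
    (p : U) : ∃ q, IsDistPreserving (insert (p, q) S) := by
  have := hfin.to_subtype
  obtain ⟨q, hq⟩ := hV.exists_forall_dist_eq_dist hbU (ι := S) (x := fun b => b.1.1)
    (y := fun b => b.1.2) (fun a b => hS _ a.2 _ b.2) p
  exact ⟨q, hS.insert fun b hb => (hq ⟨b, hb⟩).symm⟩

lemma ExactExtProp.exists_isDistPreserving_insert_snd (hU : ExactExtProp U)
    (hbV : ∀ x y : V, dist x y ≤ 1) {S : Set (U × V)} (hfin : S.Finite) (hS : IsDistPreserving S)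
    (q : V) : ∃ p, IsDistPreserving (insert (p, q) S) := by
  have := hfin.to_subtype
  obtain ⟨p, hp⟩ := hU.exists_forall_dist_eq_dist hbV (ι := S) (x := fun b => b.1.2)
    (y := fun b => b.1.1) (fun a b => (hS _ a.2 _ b.2).symm) q
  exact ⟨p, hS.insert fun b hb => hp ⟨b, hb⟩⟩

theorem exists_isDistPreserving_dense [SeparableSpace U] [SeparableSpace V]
    (hU : ExactExtProp U) (hV : ExactExtProp V)
    (hbU : ∀ x y : U, dist x y ≤ 1) (hbV : ∀ x y : V, dist x y ≤ 1) :
    ∃ R : Set (U × V), IsDistPreserving R ∧ Dense (Prod.fst '' R) ∧ Dense (Prod.snd '' R) := by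
  let P := {S : Set (U × V) // S.Finite ∧ IsDistPreserving S}
  let forth (p : U) : Order.Cofinal P :=
    ⟨{T | ∃ q, (p, q) ∈ T.1}, fun S => by
      obtain ⟨q, hq⟩ := hV.exists_isDistPreserving_insert_fst hbU S.2.1 S.2.2 p
      exact ⟨⟨_, S.2.1.insert _, hq⟩, ⟨q, Set.mem_insert _ _⟩, Set.subset_insert _ _⟩⟩
  let back (q : V) : Order.Cofinal P :=
    ⟨{T | ∃ p, (p, q) ∈ T.1}, fun S => by
      obtain ⟨p, hp⟩ := hU.exists_isDistPreserving_insert_snd hbV S.2.1 S.2.2 q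
      exact ⟨⟨_, S.2.1.insert _, hp⟩, ⟨p, Set.mem_insert _ _⟩, Set.subset_insert _ _⟩⟩
  obtain ⟨s, hsc, hsd⟩ := exists_countable_dense U
  obtain ⟨t, htc, htd⟩ := exists_countable_dense V
  have : Countable s := hsc.to_subtype
  have : Countable t := htc.to_subtype
  have : Encodable (s ⊕ t) := Encodable.ofCountable _
  let D : s ⊕ t → Order.Cofinal P := Sum.elim (fun p => forth p) (fun q => back q)
  let empty : P := ⟨∅, Set.finite_empty, by simp [IsDistPreserving]⟩
  let seq := Order.sequenceOfCofinals empty D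
  have hmono := Order.sequenceOfCofinals.monotone empty D
  refine ⟨⋃ n, (seq n).1, ?_, hsd.mono ?_, htd.mono ?_⟩
  · simp only [IsDistPreserving, Set.mem_iUnion]
    rintro a ⟨n, ha⟩ b ⟨m, hb⟩
    exact (seq (max n m)).2.2 a (hmono (le_max_left n m) ha) b (hmono (le_max_right n m) hb)
  · intro p hp
    obtain ⟨q, hq⟩ := Order.sequenceOfCofinals.encode_mem _ D (.inl ⟨p, hp⟩)
    exact ⟨(p, q), Set.mem_iUnion.2 ⟨_, hq⟩, rfl⟩
  · intro q hq
    obtain ⟨p, hp⟩ := Order.sequenceOfCofinals.encode_mem _ D (.inr ⟨q, hq⟩)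
    exact ⟨(p, q), Set.mem_iUnion.2 ⟨_, hp⟩, rfl⟩

end BackAndForth

/-- Any two complete separable metric spaces of diameter `≤ 1`
satisfying the approximate one-point extension property are isometric. -/
theorem unique_approx_ext_space (U V : Type) [MetricSpace U] [MetricSpace V]
    [CompleteSpace U] [CompleteSpace V] [SeparableSpace U] [SeparableSpace V]
    (hbU : ∀ x y : U, dist x y ≤ 1) (hbV : ∀ x y : V, dist x y ≤ 1)
    (hU : ApproxExtProp U) (hV : ApproxExtProp V) :
    Nonempty (U ≃ᵢ V) := by
  obtain ⟨R, hR, hRU, hRV⟩ :=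
    exists_isDistPreserving_dense (hU.exactExtProp hbU) (hV.exactExtProp hbV) hbU hbV
  exact hR.nonempty_isometryEquiv hRU hRV
end
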